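/- arXiv:1109.1317 — 3 statements merged into one kernel-verified Lean document; each statement's English description precedes it below -/
import Mathlib

section
/- The bound structures for φ and 𝒜 over a fixed Tseitin vocabulary form a lattice under the strengthening order, provided φ is 𝒜-satisfiable: the instance structure 𝒜 (undefined on all expansion and Tseitin symbols) is the minimum element, and the partial structure defined exactly on those Tseitin atoms having the same truth value in every total Tseitin model of φ strengthening 𝒜 is the maximum element. -/
/-- Ground NNF formulas over atoms `V`: positive and negative literals, and
conjunctions/disjunctions of arbitrary arity. -/
inductive GF (V : Type) where
  | pos : V → GF V
  | neg : V → GF V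
  | conj : List (GF V) → GF V
  | disj : List (GF V) → GF V

/-- Truth of a ground NNF formula under an assignment to the atoms. -/
def evalGF {V : Type} (w : V → Prop) : GF V → Prop
  | .pos v => w v
  | .neg v => ¬ w v
  | .conj l => ∀ g ∈ l.attach, evalGF w g.1
  | .disj l => ∃ g ∈ l.attach, evalGF w g.1
decreasing_by all_goals first
  | (have h := List.sizeOf_lt_of_mem g.2; simp; omega)
  | simp

variable {S E : Type}

/-- Atoms: instance (σ) atoms `S` and expansion (ε) atoms `E`. -/
abbrev Atom (S E : Type) := S ⊕ E

/-- The Tseitin vocabulary for a ground formula: the atoms together with a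
Tseitin symbol for each (sub)formula. -/
abbrev TVoc (S E : Type) := Atom S E ⊕ GF (Atom S E)

/-- A partial structure over the Tseitin vocabulary (`none` = undefined). -/
abbrev PStr (S E : Type) := TVoc S E → Option Bool

/-- A total structure over the Tseitin vocabulary. -/
abbrev TStr (S E : Type) := TVoc S E → Bool

/-- A total Tseitin structure: the value of each Tseitin symbol equals the truth
value of the corresponding subformula. -/
def TseitinStr (W : TStr S E) : Prop :=
  ∀ α : GF (Atom S E), W (Sum.inr α) = true ↔ evalGF (fun v => W (Sum.inl v) = true) α

/-- A total structure strengthens a partial structure. -/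
def strengthens (P : PStr S E) (W : TStr S E) : Prop :=
  ∀ (x : TVoc S E) (b : Bool), P x = some b → W x = b

/-- Strengthening order on partial structures. -/
def pLE (P Q : PStr S E) : Prop :=
  ∀ (x : TVoc S E) (b : Bool), P x = some b → Q x = some b

/-- The instance structure `𝒜` (interpreting the σ-atoms by `IA`) viewed as a
partial structure over the Tseitin vocabulary, undefined on all expansion and
Tseitin symbols. -/
def instStr (IA : S → Bool) : PStr S E := fun x =>
  match x with
  | Sum.inl (Sum.inl s) => some (IA s)
  | _ => none

/-- A total Tseitin model of `φ` strengthening the instance structure. -/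
def TModel (φ : GF (Atom S E)) (IA : S → Bool) (W : TStr S E) : Prop :=
  TseitinStr W ∧ strengthens (instStr IA) W ∧ evalGF (fun v => W (Sum.inl v) = true) φ

/-- A bound structure for `φ` and `𝒜`: a partial Tseitin structure strengthening
`𝒜` that is conservative: every total Tseitin model of `φ` strengthening `𝒜`
strengthens it. -/
def Bound (φ : GF (Atom S E)) (IA : S → Bool) (B : PStr S E) : Prop :=
  pLE (instStr IA) B ∧ ∀ W : TStr S E, TModel φ IA W → strengthens B W

/-- The meet of two partial structures: defined where they agree. -/
def meetB (B C : PStr S E) : PStr S E := fun x => if B x = C x then B x else none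

/-- The join of two partial structures: the pointwise union of defined values
(preferring `B` where both are defined). -/
def joinB (B C : PStr S E) : PStr S E := fun x => (B x).orElse fun _ => C x

open Classical in
/-- The maximum bound structure: defined exactly on those symbols having the same
truth value in every total Tseitin model of `φ` strengthening `𝒜`. -/
noncomputable def maxB (φ : GF (Atom S E)) (IA : S → Bool) : PStr S E := fun x =>
  if h : ∃ b : Bool, ∀ W : TStr S E, TModel φ IA W → W x = b then some h.choose else none

/-!
Conservativity is a statement about every model at once, so it is preserved by weakening a
structure and by taking the pointwise union of two conservative structures. Hence bound
structures are closed under agreement (`meetB`) and union (`joinB`). The union is an upper bound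
of both arguments because two conservative structures are strengthened by a common model (this
is where satisfiability enters) and so cannot disagree on a common symbol. The maximum bound
structure collects exactly the values forced in all models; satisfiability makes the forced value
unique.
-/

variable {φ : GF (Atom S E)} {IA : S → Bool} {B C P : PStr S E} {W : TStr S E}
  {x : TVoc S E} {b : Bool}

theorem meetB_eq_some : meetB B C x = some b ↔ B x = some b ∧ C x = some b := by
  unfold meetB
  split_ifs with hBC
  · rw [← hBC, and_self]
  · exact ⟨fun h => (nomatch h), fun ⟨hB, hC⟩ => hBC (hB.trans hC.symm)⟩

theorem joinB_eq_some : joinB B C x = some b ↔ B x = some b ∨ B x = none ∧ C x = some b := by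
  unfold joinB
  cases B x <;> simp [Option.orElse]

theorem pLE_meetB_left : pLE (meetB B C) B := fun _ _ h => (meetB_eq_some.1 h).1

theorem pLE_meetB_right : pLE (meetB B C) C := fun _ _ h => (meetB_eq_some.1 h).2

theorem pLE_meetB (hB : pLE P B) (hC : pLE P C) : pLE P (meetB B C) :=
  fun x b h => meetB_eq_some.2 ⟨hB x b h, hC x b h⟩

theorem pLE_joinB_left : pLE B (joinB B C) := fun _ _ h => joinB_eq_some.2 (.inl h)

theorem joinB_pLE (hB : pLE B P) (hC : pLE C P) : pLE (joinB B C) P := fun x b h => by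
  rcases joinB_eq_some.1 h with hBx | ⟨-, hCx⟩
  exacts [hB x b hBx, hC x b hCx]

theorem strengthens.of_pLE (hPB : pLE P B) (hB : strengthens B W) : strengthens P W :=
  fun x b h => hB x b (hPB x b h)

theorem strengthens.joinB (hB : strengthens B W) (hC : strengthens C W) :
    strengthens (joinB B C) W :=
  fun x b h => by
    rcases joinB_eq_some.1 h with hBx | ⟨-, hCx⟩
    exacts [hB x b hBx, hC x b hCx]

/-- Two structures strengthened by a common total structure agree wherever both are defined. -/
theorem pLE_joinB_right (hB : strengthens B W) (hC : strengthens C W) : pLE C (joinB B C) :=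
  fun x b h => by
    cases hBx : B x with
    | none => exact joinB_eq_some.2 (.inr ⟨hBx, h⟩)
    | some c =>
      have hcb : c = b := (hB x c hBx).symm.trans (hC x b h)
      exact joinB_eq_some.2 (.inl (hcb ▸ hBx))

theorem bound_instStr : Bound φ IA (instStr IA) := ⟨fun _ _ h => h, fun _ hW => hW.2.1⟩

theorem Bound.meetB (hB : Bound φ IA B) (hC : Bound φ IA C) : Bound φ IA (meetB B C) :=
  ⟨pLE_meetB hB.1 hC.1, fun W hW => (hB.2 W hW).of_pLE pLE_meetB_left⟩

theorem Bound.joinB (hB : Bound φ IA B) (hC : Bound φ IA C) : Bound φ IA (joinB B C) :=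
  ⟨fun x b h => pLE_joinB_left x b (hB.1 x b h), fun W hW => (hB.2 W hW).joinB (hC.2 W hW)⟩

theorem maxB_eq_some (hW : TModel φ IA W) :
    maxB φ IA x = some b ↔ ∀ W' : TStr S E, TModel φ IA W' → W' x = b := by
  unfold maxB
  split_ifs with hforced
  · refine ⟨fun h => Option.some_inj.1 h ▸ hforced.choose_spec, fun h => ?_⟩
    rw [← h W hW, hforced.choose_spec W hW]
  · exact ⟨fun h => (nomatch h), fun h => (hforced ⟨b, h⟩).elim⟩

theorem strengthens_maxB (hW : TModel φ IA W) : strengthens (maxB φ IA) W :=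
  fun _ _ h => (maxB_eq_some hW).1 h W hW

theorem Bound.pLE_maxB (hW : TModel φ IA W) (hB : Bound φ IA B) : pLE B (maxB φ IA) :=
  fun _ _ h => (maxB_eq_some hW).2 fun W' hW' => hB.2 W' hW' _ _ h

theorem bound_maxB (hW : TModel φ IA W) : Bound φ IA (maxB φ IA) :=
  ⟨bound_instStr.pLE_maxB hW, fun _ hW' => strengthens_maxB hW'⟩

/-- provided `φ` is `𝒜`-satisfiable, the bound structures for `φ`
and `𝒜` over the Tseitin vocabulary form a lattice under the strengthening
order: the instance structure (undefined on all expansion and Tseitin symbols)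
is the minimum element; the partial structure defined exactly on the symbols
having the same value in every total Tseitin model of `φ` strengthening `𝒜` is
the maximum element; the meet (pointwise agreement) of two bound structures is
their greatest lower bound, and the join (pointwise union of defined values)
is their least upper bound. -/
theorem bound_structures_lattice (φ : GF (Atom S E)) (IA : S → Bool)
    (hsat : ∃ W : TStr S E, TModel φ IA W) :
    (Bound φ IA (instStr IA) ∧ ∀ B : PStr S E, Bound φ IA B → pLE (instStr IA) B) ∧
    (Bound φ IA (maxB φ IA) ∧ ∀ B : PStr S E, Bound φ IA B → pLE B (maxB φ IA)) ∧
    (∀ B C : PStr S E, Bound φ IA B → Bound φ IA C →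
      (Bound φ IA (meetB B C) ∧ pLE (meetB B C) B ∧ pLE (meetB B C) C ∧
        ∀ P : PStr S E, Bound φ IA P → pLE P B → pLE P C → pLE P (meetB B C))) ∧
    (∀ B C : PStr S E, Bound φ IA B → Bound φ IA C →
      (Bound φ IA (joinB B C) ∧ pLE B (joinB B C) ∧ pLE C (joinB B C) ∧
        ∀ P : PStr S E, Bound φ IA P → pLE B P → pLE C P → pLE (joinB B C) P)) := by
  obtain ⟨W, hW⟩ := hsat
  refine ⟨⟨bound_instStr, fun B hB => hB.1⟩, ⟨bound_maxB hW, fun B hB => hB.pLE_maxB hW⟩,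
    fun B C hB hC => ⟨hB.meetB hC, pLE_meetB_left, pLE_meetB_right, fun P _ => pLE_meetB⟩,
    fun B C hB hC => ⟨hB.joinB hC, pLE_joinB_left, ?_, fun P _ => joinB_pLE⟩⟩
  exact pLE_joinB_right (hB.2 W hW) (hC.2 W hW)
end

section
/- Soundness of bounded top-down grounding: for any bound structure 𝒜̂ for φ and 𝒜, the formula produced by the top-down grounding algorithm Gnd_𝒜̂(φ, ∅) is a grounding of φ over 𝒜̂: (1) if some total Tseitin strengthening of 𝒜̂ satisfies φ then some such structure satisfies Gnd_𝒜̂(φ,∅); and (2) every total Tseitin structure strengthening 𝒜̂ (with intended constants) satisfying Gnd_𝒜̂(φ,∅) satisfies φ. -/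
/-- Terms over domain `D`: variables (named by naturals) or constants `ã` for
domain elements `a ∈ D` (with the intended interpretation built in). -/
inductive Term (D : Type) where
  | var : ℕ → Term D
  | const : D → Term D

/-- NNF first-order formulas over relational vocabulary `Rel` with arities `ar`:
atoms, negated atoms, conjunctions/disjunctions of arbitrary arity, quantifiers. -/
inductive Formula (D Rel : Type) (ar : Rel → ℕ) where
  | atom  : (r : Rel) → (Fin (ar r) → Term D) → Formula D Rel ar
  | natom : (r : Rel) → (Fin (ar r) → Term D) → Formula D Rel ar
  | conj  : List (Formula D Rel ar) → Formula D Rel ar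
  | disj  : List (Formula D Rel ar) → Formula D Rel ar
  | all   : ℕ → Formula D Rel ar → Formula D Rel ar
  | ex    : ℕ → Formula D Rel ar → Formula D Rel ar

variable {D Rel : Type} {ar : Rel → ℕ}

/-- Term evaluation: constants `ã` denote `a` (the intended interpretation). -/
def tval (ν : ℕ → D) : Term D → D
  | .var n => ν n
  | .const a => a

/-- Satisfaction in a total structure interpreting each relation symbol. -/
def eval (I : (r : Rel) → (Fin (ar r) → D) → Prop) :
    Formula D Rel ar → (ℕ → D) → Prop
  | .atom r args, ν => I r fun i => tval ν (args i)
  | .natom r args, ν => ¬ I r fun i => tval ν (args i)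
  | .conj l, ν => ∀ ψ ∈ l.attach, eval I ψ.1 ν
  | .disj l, ν => ∃ ψ ∈ l.attach, eval I ψ.1 ν
  | .all x ψ, ν => ∀ a : D, eval I ψ (Function.update ν x a)
  | .ex x ψ, ν => ∃ a : D, eval I ψ (Function.update ν x a)
decreasing_by all_goals first
  | (have h := List.sizeOf_lt_of_mem ψ.2; simp; omega)
  | simp

/-- Apply a substitution (partial map from variables to domain constants) to a term. -/
def stm (θ : ℕ → Option D) : Term D → Term D
  | .var n => match θ n with | some a => .const a | none => .var n
  | .const a => .const a

/-- Extend a substitution by binding variable `x` to domain element `a`. -/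
def updOpt (θ : ℕ → Option D) (x : ℕ) (a : D) : ℕ → Option D :=
  fun n => if n = x then some a else θ n

/-- Algorithm 1: the naive grounding `NaiveGnd_𝒜(φ, θ)`: atoms and negated atoms are
instantiated by `θ`, connectives are grounded componentwise, `∀x ψ` is replaced by
`⋀_{a∈A} ψ(ã)` and `∃x ψ` by `⋁_{a∈A} ψ(ã)`. -/
noncomputable def naiveGnd [Fintype D] (θ : ℕ → Option D) : Formula D Rel ar → Formula D Rel ar
  | .atom r args => .atom r fun i => stm θ (args i)
  | .natom r args => .natom r fun i => stm θ (args i)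
  | .conj l => .conj (l.attach.map fun ψ => naiveGnd θ ψ.1)
  | .disj l => .disj (l.attach.map fun ψ => naiveGnd θ ψ.1)
  | .all x ψ => .conj ((Finset.univ.toList (α := D)).map fun a => naiveGnd (updOpt θ x a) ψ)
  | .ex x ψ => .disj ((Finset.univ.toList (α := D)).map fun a => naiveGnd (updOpt θ x a) ψ)
decreasing_by all_goals first
  | (have h := List.sizeOf_lt_of_mem ψ.2; simp; omega)
  | simp

/-- The formula `⊤` (empty conjunction) or `⊥` (empty disjunction). -/
def ofB (b : Bool) : Formula D Rel ar := if b then .conj [] else .disj []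

/-- Algorithm 2: top-down grounding over a bound structure `𝒜̂`, given by its
Tseitin part `hatT` (a three-valued interpretation of the Tseitin atom
`⌈ψ⌉[θ]` for each subformula `ψ` and substitution `θ`) and its atom part `hatP`
(a three-valued interpretation of instantiated atoms).  `Eval` (the atom cases)
returns `⊤`/`⊥` for atoms decided by `𝒜̂` and the instantiated atom otherwise;
`Simpl` (inlined at each recursive call) returns `⊤`/`⊥` if `𝒜̂` decides the
Tseitin atom of the subformula instance and otherwise recurses via `Gnd`. -/
noncomputable def gnd [Fintype D]
    (hatT : Formula D Rel ar → (ℕ → Option D) → Option Bool)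
    (hatP : (r : Rel) → (Fin (ar r) → Term D) → Option Bool) :
    Formula D Rel ar → (ℕ → Option D) → Formula D Rel ar
  | .atom r args, θ =>
      match hatP r (fun i => stm θ (args i)) with
      | some b => ofB b
      | none => .atom r fun i => stm θ (args i)
  | .natom r args, θ =>
      match hatP r (fun i => stm θ (args i)) with
      | some b => ofB (!b)
      | none => .natom r fun i => stm θ (args i)
  | .conj l, θ => .conj (l.attach.map fun ψ =>
      match hatT ψ.1 θ with
      | some b => ofB b
      | none => gnd hatT hatP ψ.1 θ)
  | .disj l, θ => .disj (l.attach.map fun ψ =>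
      match hatT ψ.1 θ with
      | some b => ofB b
      | none => gnd hatT hatP ψ.1 θ)
  | .all x ψ, θ => .conj ((Finset.univ.toList (α := D)).map fun a =>
      match hatT ψ (updOpt θ x a) with
      | some b => ofB b
      | none => gnd hatT hatP ψ (updOpt θ x a))
  | .ex x ψ, θ => .disj ((Finset.univ.toList (α := D)).map fun a =>
      match hatT ψ (updOpt θ x a) with
      | some b => ofB b
      | none => gnd hatT hatP ψ (updOpt θ x a))
decreasing_by all_goals first
  | (have h := List.sizeOf_lt_of_mem ψ.2; simp; omega)
  | simp

/-- A total (Tseitin) structure, given by an interpretation `I` of all relation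
symbols (the values of the Tseitin symbols are determined by `I`), strengthens
the bound structure `𝒜̂ = (hatT, hatP)`: wherever `𝒜̂` decides an atom or the
Tseitin atom of a subformula instance, the corresponding truth value in `I`
agrees. -/
def strengthensHat
    (hatT : Formula D Rel ar → (ℕ → Option D) → Option Bool)
    (hatP : (r : Rel) → (Fin (ar r) → Term D) → Option Bool)
    (I : (r : Rel) → (Fin (ar r) → D) → Prop) : Prop :=
  (∀ (r : Rel) (t : Fin (ar r) → Term D) (b : Bool), hatP r t = some b →
    ∀ ν : ℕ → D, (I r (fun i => tval ν (t i)) ↔ b = true)) ∧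
  (∀ (ψ : Formula D Rel ar) (θ : ℕ → Option D) (b : Bool), hatT ψ θ = some b →
    ∀ ν : ℕ → D, (eval I ψ (fun n => (θ n).getD (ν n)) ↔ b = true))

/-- `I` is (the interpretation of) an expansion of the instance structure `𝒜`,
given by the interpretation `IA` of the instance relation symbols (those
satisfying `InstRel`). -/
def expansionOf (InstRel : Rel → Prop)
    (IA : (r : Rel) → (Fin (ar r) → D) → Prop)
    (I : (r : Rel) → (Fin (ar r) → D) → Prop) : Prop :=
  ∀ r : Rel, InstRel r → ∀ t : Fin (ar r) → D, (I r t ↔ IA r t)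

/-- `𝒜̂ = (hatT, hatP)` is a bound structure for `φ` and `𝒜`: it strengthens `𝒜`
(it is defined, with the correct value, on every instance atom), and it is
conservative: every total structure which is an expansion of `𝒜` and satisfies
`φ` strengthens `𝒜̂`. -/
def BoundHat (InstRel : Rel → Prop)
    (IA : (r : Rel) → (Fin (ar r) → D) → Prop)
    (φ : Formula D Rel ar)
    (hatT : Formula D Rel ar → (ℕ → Option D) → Option Bool)
    (hatP : (r : Rel) → (Fin (ar r) → Term D) → Option Bool) : Prop :=
  (∀ r : Rel, InstRel r → ∀ t : Fin (ar r) → D,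
    ∃ b : Bool, hatP r (fun i => Term.const (t i)) = some b ∧ (b = true ↔ IA r t)) ∧
  (∀ I : (r : Rel) → (Fin (ar r) → D) → Prop, expansionOf InstRel IA I →
    (∀ ν : ℕ → D, eval I φ ν) → strengthensHat hatT hatP I)

/-! Under any total structure strengthening `𝒜̂`, `Gnd_𝒜̂(ψ, θ)` is equivalent to the
instance `ψθ`: at each `Simpl` call a decided Tseitin atom is replaced by its value,
which is the value of the subformula instance in every strengthening, and an
undecided one is grounded recursively. Soundness then follows at `θ = ∅`. -/

section Semantics

variable (I : (r : Rel) → (Fin (ar r) → D) → Prop)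

lemma eval_ofB (b : Bool) (ν : ℕ → D) : eval I (ofB b : Formula D Rel ar) ν ↔ b = true := by
  cases b <;> simp [ofB, eval]

lemma eval_conj_map {α : Type} (l : List α) (f : α → Formula D Rel ar) (ν : ℕ → D) :
    eval I (.conj (l.map f)) ν ↔ ∀ a ∈ l, eval I (f a) ν := by
  rw [eval]
  simp

lemma eval_disj_map {α : Type} (l : List α) (f : α → Formula D Rel ar) (ν : ℕ → D) :
    eval I (.disj (l.map f)) ν ↔ ∃ a ∈ l, eval I (f a) ν := by
  rw [eval]
  simp

end Semantics

lemma tval_stm (θ : ℕ → Option D) (ν : ℕ → D) (t : Term D) :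
    tval ν (stm θ t) = tval (fun n => (θ n).getD (ν n)) t := by
  cases t with
  | var n => cases h : θ n <;> simp [stm, tval, h]
  | const a => simp [stm, tval]

lemma getD_updOpt (θ : ℕ → Option D) (ν : ℕ → D) (x : ℕ) (a : D) :
    (fun n => (updOpt θ x a n).getD (ν n))
      = Function.update (fun n => (θ n).getD (ν n)) x a := by
  funext n
  by_cases h : n = x <;> simp [updOpt, Function.update, h]

section Strengthening

variable {hatT : Formula D Rel ar → (ℕ → Option D) → Option Bool}
  {hatP : (r : Rel) → (Fin (ar r) → Term D) → Option Bool}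
  {I : (r : Rel) → (Fin (ar r) → D) → Prop}

lemma strengthensHat.atom_iff (hs : strengthensHat hatT hatP I) {r : Rel}
    {args : Fin (ar r) → Term D} {θ : ℕ → Option D} {b : Bool}
    (hb : hatP r (fun i => stm θ (args i)) = some b) (ν : ℕ → D) :
    I r (fun i => tval (fun n => (θ n).getD (ν n)) (args i)) ↔ b = true := by
  simpa only [tval_stm] using hs.1 r _ b hb ν

variable [Fintype D]

lemma eval_simpl_iff (hs : strengthensHat hatT hatP I) (ψ : Formula D Rel ar)
    (θ : ℕ → Option D) (ν : ℕ → D)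
    (hgnd : eval I (gnd hatT hatP ψ θ) ν ↔ eval I ψ (fun n => (θ n).getD (ν n))) :
    eval I (match hatT ψ θ with | some b => ofB b | none => gnd hatT hatP ψ θ) ν
      ↔ eval I ψ (fun n => (θ n).getD (ν n)) := by
  cases hb : hatT ψ θ with
  | some b => exact (eval_ofB I b ν).trans (hs.2 ψ θ b hb ν).symm
  | none => exact hgnd

theorem eval_gnd_iff (hs : strengthensHat hatT hatP I) (ψ : Formula D Rel ar)
    (θ : ℕ → Option D) (ν : ℕ → D) :
    eval I (gnd hatT hatP ψ θ) ν ↔ eval I ψ (fun n => (θ n).getD (ν n)) := by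
  induction ψ, θ using gnd.induct (hatP := hatP) generalizing ν with
  | case1 r args θ b hb =>
      rw [gnd, hb, eval_ofB, eval, hs.atom_iff hb]
  | case2 r args θ hb =>
      simp only [gnd, hb, eval, tval_stm]
  | case3 r args θ b hb =>
      rw [gnd, hb, eval_ofB, eval, hs.atom_iff hb]
      cases b <;> simp
  | case4 r args θ hb =>
      simp only [gnd, hb, eval, tval_stm]
  | case5 l θ ih =>
      rw [gnd, eval_conj_map, eval]
      exact forall₂_congr fun ψ _ => eval_simpl_iff hs ψ.1 θ ν (ih ψ ν)
  | case6 l θ ih =>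
      rw [gnd, eval_disj_map, eval]
      exact exists_congr fun ψ => and_congr_right fun _ => eval_simpl_iff hs ψ.1 θ ν (ih ψ ν)
  | case7 x ψ θ ih =>
      rw [gnd, eval_conj_map, eval]
      simp only [Finset.mem_toList, Finset.mem_univ, true_imp_iff]
      refine forall_congr' fun a => ?_
      rw [eval_simpl_iff hs ψ _ ν (ih a ν), getD_updOpt]
  | case8 x ψ θ ih =>
      rw [gnd, eval_disj_map, eval]
      simp only [Finset.mem_toList, Finset.mem_univ, true_and]
      refine exists_congr fun a => ?_
      rw [eval_simpl_iff hs ψ _ ν (ih a ν), getD_updOpt]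

end Strengthening

theorem gnd_sound_general [Fintype D]
    (φ : Formula D Rel ar)
    (hatT : Formula D Rel ar → (ℕ → Option D) → Option Bool)
    (hatP : (r : Rel) → (Fin (ar r) → Term D) → Option Bool) :
    ((∃ I : (r : Rel) → (Fin (ar r) → D) → Prop,
        strengthensHat hatT hatP I ∧ ∀ ν : ℕ → D, eval I φ ν) →
      (∃ I : (r : Rel) → (Fin (ar r) → D) → Prop,
        strengthensHat hatT hatP I ∧
          ∀ ν : ℕ → D, eval I (gnd hatT hatP φ (fun _ => none)) ν)) ∧
    (∀ (I : (r : Rel) → (Fin (ar r) → D) → Prop) (ν : ℕ → D),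
      strengthensHat hatT hatP I →
      eval I (gnd hatT hatP φ (fun _ => none)) ν → eval I φ ν) := by
  have eval_gnd_empty : ∀ {I} (hs : strengthensHat hatT hatP I) (ν : ℕ → D),
      eval I (gnd hatT hatP φ fun _ => none) ν ↔ eval I φ ν := fun hs ν =>
    eval_gnd_iff hs φ _ ν
  exact ⟨fun ⟨I, hs, hφ⟩ => ⟨I, hs, fun ν => (eval_gnd_empty hs ν).mpr (hφ ν)⟩,
    fun _ ν hs hgnd => (eval_gnd_empty hs ν).mp hgnd⟩

/-- soundness of bounded top-down grounding.  For any bound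
structure `𝒜̂` for the NNF sentence `φ` and instance structure `𝒜`, the formula
`Gnd_𝒜̂(φ, ∅)` produced by the top-down algorithm is a grounding of `φ` over
`𝒜̂`: (1) if some total Tseitin strengthening of `𝒜̂` satisfies `φ` then some
such structure satisfies `Gnd_𝒜̂(φ, ∅)`; and (2) every total Tseitin structure
strengthening `𝒜̂` (with the intended interpretation of domain constants) that
satisfies `Gnd_𝒜̂(φ, ∅)` satisfies `φ`. -/
theorem gnd_sound [Fintype D]
    (InstRel : Rel → Prop)
    (IA : (r : Rel) → (Fin (ar r) → D) → Prop)
    (φ : Formula D Rel ar)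
    (hatT : Formula D Rel ar → (ℕ → Option D) → Option Bool)
    (hatP : (r : Rel) → (Fin (ar r) → Term D) → Option Bool)
    (hbound : BoundHat InstRel IA φ hatT hatP) :
    ((∃ I : (r : Rel) → (Fin (ar r) → D) → Prop,
        strengthensHat hatT hatP I ∧ ∀ ν : ℕ → D, eval I φ ν) →
      (∃ I : (r : Rel) → (Fin (ar r) → D) → Prop,
        strengthensHat hatT hatP I ∧
          ∀ ν : ℕ → D, eval I (gnd hatT hatP φ (fun _ => none)) ν)) ∧
    (∀ (I : (r : Rel) → (Fin (ar r) → D) → Prop) (ν : ℕ → D),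
      strengthensHat hatT hatP I →
      eval I (gnd hatT hatP φ (fun _ => none)) ν → eval I φ ν) :=
  gnd_sound_general φ hatT hatP
end

section
/- Soundness of bound propagation: let (T_ψ, F_ψ) be the least fixed point of the propagation rules started from the instance bounds (T_P = P^𝒜, F_P = A^k ∖ P^𝒜 for instance predicates P, and T_φ = {⟨⟩}). Then for every subformula ψ(x̄) of φ and tuple ā, if ā ∈ T_ψ then ψ(ā) is true in every expansion of 𝒜 satisfying φ, and if ā ∈ F_ψ then ψ(ā) is false in every such expansion. -/
variable {D Rel : Type} {ar : Rel → ℕ}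

/-- A family of bounds: for each subformula `ψ` a true bound `Tf ψ` and a false
bound `Ff ψ` (sets of assignments to the free variables, represented as full
variable assignments), and for each predicate symbol `r` a true bound `Tp r` and
a false bound `Fp r` (sets of tuples). -/
structure Bnds (D Rel : Type) (ar : Rel → ℕ) where
  Tf : Formula D Rel ar → (ℕ → D) → Prop
  Ff : Formula D Rel ar → (ℕ → D) → Prop
  Tp : (r : Rel) → (Fin (ar r) → D) → Prop
  Fp : (r : Rel) → (Fin (ar r) → D) → Prop

/-- Componentwise inclusion of bound families. -/
def leBnds (B C : Bnds D Rel ar) : Prop :=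
  (∀ ψ ν, B.Tf ψ ν → C.Tf ψ ν) ∧ (∀ ψ ν, B.Ff ψ ν → C.Ff ψ ν) ∧
  (∀ r t, B.Tp r t → C.Tp r t) ∧ (∀ r t, B.Fp r t → C.Fp r t)

/-- The one-step bound-propagation operator: simultaneously apply all
downward-true (↓t), upward-true (↑t), downward-false (↓f) and upward-false (↑f)
rules of Table 1 to the current bounds (keeping the already derived bounds). -/
def step (B : Bnds D Rel ar) : Bnds D Rel ar where
  Tf := fun ψ ν => B.Tf ψ ν
    -- ↓t for ∨: Tψᵢ ← Tγ ∧ ⋀_{j≠i} Fψⱼ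
    ∨ (∃ (l : List (Formula D Rel ar)) (i : Fin l.length), l.get i = ψ ∧
        B.Tf (.disj l) ν ∧ ∀ j : Fin l.length, j ≠ i → B.Ff (l.get j) ν)
    -- ↓t for ∧: Tψᵢ ← Tγ
    ∨ (∃ l : List (Formula D Rel ar), ψ ∈ l ∧ B.Tf (.conj l) ν)
    -- ↓t for ∃: Tψ(x̄,y) ← Tγ ∧ ∀ y'≠y. Fψ(x̄,y')
    ∨ (∃ (y : ℕ) (a : D) (ν₀ : ℕ → D), ν = Function.update ν₀ y a ∧
        B.Tf (.ex y ψ) ν₀ ∧ ∀ a' : D, a' ≠ a → B.Ff ψ (Function.update ν₀ y a'))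
    -- ↓t for ∀: Tψ(x̄,y) ← Tγ
    ∨ (∃ (y : ℕ) (a : D) (ν₀ : ℕ → D), ν = Function.update ν₀ y a ∧ B.Tf (.all y ψ) ν₀)
    -- ↑t rules
    ∨ (∃ l : List (Formula D Rel ar), ψ = .conj l ∧ ∀ χ ∈ l, B.Tf χ ν)
    ∨ (∃ (l : List (Formula D Rel ar)) (χ : Formula D Rel ar), ψ = .disj l ∧ χ ∈ l ∧ B.Tf χ ν)
    ∨ (∃ (y : ℕ) (χ : Formula D Rel ar), ψ = .ex y χ ∧ ∃ a : D, B.Tf χ (Function.update ν y a))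
    ∨ (∃ (y : ℕ) (χ : Formula D Rel ar), ψ = .all y χ ∧ ∀ a : D, B.Tf χ (Function.update ν y a))
    ∨ (∃ (r : Rel) (args : Fin (ar r) → Term D), ψ = .atom r args ∧
        B.Tp r fun i => tval ν (args i))
    ∨ (∃ (r : Rel) (args : Fin (ar r) → Term D), ψ = .natom r args ∧
        B.Fp r fun i => tval ν (args i))
  Ff := fun ψ ν => B.Ff ψ ν
    -- ↓f for ∧: Fψᵢ ← Fγ ∧ ⋀_{j≠i} Tψⱼ
    ∨ (∃ (l : List (Formula D Rel ar)) (i : Fin l.length), l.get i = ψ ∧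
        B.Ff (.conj l) ν ∧ ∀ j : Fin l.length, j ≠ i → B.Tf (l.get j) ν)
    -- ↓f for ∨: Fψᵢ ← Fγ
    ∨ (∃ l : List (Formula D Rel ar), ψ ∈ l ∧ B.Ff (.disj l) ν)
    -- ↓f for ∀: Fψ(x̄,y) ← Fγ ∧ ∀ y'≠y. Tψ(x̄,y')
    ∨ (∃ (y : ℕ) (a : D) (ν₀ : ℕ → D), ν = Function.update ν₀ y a ∧
        B.Ff (.all y ψ) ν₀ ∧ ∀ a' : D, a' ≠ a → B.Tf ψ (Function.update ν₀ y a'))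
    -- ↓f for ∃: Fψ(x̄,y) ← Fγ
    ∨ (∃ (y : ℕ) (a : D) (ν₀ : ℕ → D), ν = Function.update ν₀ y a ∧ B.Ff (.ex y ψ) ν₀)
    -- ↑f rules
    ∨ (∃ l : List (Formula D Rel ar), ψ = .disj l ∧ ∀ χ ∈ l, B.Ff χ ν)
    ∨ (∃ (l : List (Formula D Rel ar)) (χ : Formula D Rel ar), ψ = .conj l ∧ χ ∈ l ∧ B.Ff χ ν)
    ∨ (∃ (y : ℕ) (χ : Formula D Rel ar), ψ = .all y χ ∧ ∃ a : D, B.Ff χ (Function.update ν y a))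
    ∨ (∃ (y : ℕ) (χ : Formula D Rel ar), ψ = .ex y χ ∧ ∀ a : D, B.Ff χ (Function.update ν y a))
    ∨ (∃ (r : Rel) (args : Fin (ar r) → Term D), ψ = .atom r args ∧
        B.Fp r fun i => tval ν (args i))
    ∨ (∃ (r : Rel) (args : Fin (ar r) → Term D), ψ = .natom r args ∧
        B.Tp r fun i => tval ν (args i))
  Tp := fun r t => B.Tp r t
    -- leaf rules: T_P ← T_{P(x̄)} and T_P ← F_{¬P(x̄)}
    ∨ (∃ (args : Fin (ar r) → Term D) (ν : ℕ → D), t = (fun i => tval ν (args i)) ∧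
        (B.Tf (.atom r args) ν ∨ B.Ff (.natom r args) ν))
  Fp := fun r t => B.Fp r t
    -- leaf rules: F_P ← F_{P(x̄)} and F_P ← T_{¬P(x̄)}
    ∨ (∃ (args : Fin (ar r) → Term D) (ν : ℕ → D), t = (fun i => tval ν (args i)) ∧
        (B.Ff (.atom r args) ν ∨ B.Tf (.natom r args) ν))

/-- The bound-propagation operator started from the instance bounds: besides the
propagation rules it always includes the initial bounds `T_P = P^𝒜`,
`F_P = Aᵏ ∖ P^𝒜` for the instance predicates `P` (those satisfying `InstRel`,
interpreted in `𝒜` by `IA`), and the root bound `T_φ = {⟨⟩}` (we assume `φ` is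
`𝒜`-satisfiable). -/
def stepFrom (InstRel : Rel → Prop) (IA : (r : Rel) → (Fin (ar r) → D) → Prop)
    (φ : Formula D Rel ar) (B : Bnds D Rel ar) : Bnds D Rel ar where
  Tf := fun ψ ν => (step B).Tf ψ ν ∨ ψ = φ
  Ff := (step B).Ff
  Tp := fun r t => (step B).Tp r t ∨ (InstRel r ∧ IA r t)
  Fp := fun r t => (step B).Fp r t ∨ (InstRel r ∧ ¬ IA r t)

/-!
Every expansion `I` of `𝒜` that satisfies `φ` yields a family of bounds, namely the
sets of assignments under which each subformula is true resp. false in `I`. Each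
propagation rule is valid in a single model, and the instance and root bounds hold in
such an `I`, so this family is a fixed point of the propagation operator. The least
fixed point is contained in it, for every such `I`.
-/

theorem List.forall_mem_of_forall_get_ne {α : Type*} {l : List α} {p : α → Prop}
    (i : Fin l.length) (hi : p (l.get i)) (h : ∀ j, j ≠ i → p (l.get j)) :
    ∀ x ∈ l, p x := by
  intro x hx
  obtain ⟨j, rfl⟩ := List.mem_iff_get.1 hx
  exact (eq_or_ne j i).elim (· ▸ hi) (h j)

section Model

variable (I : (r : Rel) → (Fin (ar r) → D) → Prop)

theorem eval_conj (l : List (Formula D Rel ar)) (ν : ℕ → D) :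
    eval I (.conj l) ν ↔ ∀ χ ∈ l, eval I χ ν := by
  rw [eval]
  exact ⟨fun h χ hχ => h ⟨χ, hχ⟩ (List.mem_attach _ _), fun h ψ _ => h ψ.1 ψ.2⟩

theorem eval_disj (l : List (Formula D Rel ar)) (ν : ℕ → D) :
    eval I (.disj l) ν ↔ ∃ χ ∈ l, eval I χ ν := by
  rw [eval]
  exact ⟨fun ⟨ψ, _, h⟩ => ⟨ψ.1, ψ.2, h⟩, fun ⟨χ, hχ, h⟩ => ⟨⟨χ, hχ⟩, List.mem_attach _ _, h⟩⟩

theorem eval_all (y : ℕ) (ψ : Formula D Rel ar) (ν : ℕ → D) :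
    eval I (.all y ψ) ν ↔ ∀ a : D, eval I ψ (Function.update ν y a) := by
  rw [eval]

theorem eval_ex (y : ℕ) (ψ : Formula D Rel ar) (ν : ℕ → D) :
    eval I (.ex y ψ) ν ↔ ∃ a : D, eval I ψ (Function.update ν y a) := by
  rw [eval]

theorem eval_atom (r : Rel) (args : Fin (ar r) → Term D) (ν : ℕ → D) :
    eval I (.atom r args) ν ↔ I r fun i => tval ν (args i) := by
  rw [eval]

theorem eval_natom (r : Rel) (args : Fin (ar r) → Term D) (ν : ℕ → D) :
    eval I (.natom r args) ν ↔ ¬ I r fun i => tval ν (args i) := by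
  rw [eval]

attribute [ext] Bnds

namespace Bnds

def ofModel : Bnds D Rel ar where
  Tf := eval I
  Ff := fun ψ ν => ¬ eval I ψ ν
  Tp := I
  Fp := fun r t => ¬ I r t

theorem step_ofModel_Tf {ψ : Formula D Rel ar} {ν : ℕ → D} (h : (step (ofModel I)).Tf ψ ν) :
    eval I ψ ν := by
  rcases h with h | ⟨l, i, rfl, hT, hF⟩ | ⟨l, hψ, hT⟩ | ⟨y, a, ν₀, rfl, hT, hF⟩ |
    ⟨y, a, ν₀, rfl, hT⟩ | ⟨l, rfl, hT⟩ | ⟨l, χ, rfl, hχ, hT⟩ | ⟨y, χ, rfl, a, hT⟩ |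
    ⟨y, χ, rfl, hT⟩ | ⟨r, args, rfl, hT⟩ | ⟨r, args, rfl, hF⟩
  · exact h
  · by_contra hi
    obtain ⟨χ, hχ, hχt⟩ := (eval_disj I l ν).1 hT
    exact List.forall_mem_of_forall_get_ne (p := fun χ => ¬ eval I χ ν) i hi hF χ hχ hχt
  · exact (eval_conj I l ν).1 hT ψ hψ
  · by_contra ha
    obtain ⟨a', ha'⟩ := (eval_ex I y ψ ν₀).1 hT
    rcases eq_or_ne a' a with rfl | hne
    exacts [ha ha', hF a' hne ha']
  · exact (eval_all I y ψ ν₀).1 hT a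
  · exact (eval_conj I l ν).2 hT
  · exact (eval_disj I l ν).2 ⟨χ, hχ, hT⟩
  · exact (eval_ex I y χ ν).2 ⟨a, hT⟩
  · exact (eval_all I y χ ν).2 hT
  · exact (eval_atom I r args ν).2 hT
  · exact (eval_natom I r args ν).2 hF

theorem step_ofModel_Ff {ψ : Formula D Rel ar} {ν : ℕ → D} (h : (step (ofModel I)).Ff ψ ν) :
    ¬ eval I ψ ν := by
  rcases h with h | ⟨l, i, rfl, hF, hT⟩ | ⟨l, hψ, hF⟩ | ⟨y, a, ν₀, rfl, hF, hT⟩ |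
    ⟨y, a, ν₀, rfl, hF⟩ | ⟨l, rfl, hF⟩ | ⟨l, χ, rfl, hχ, hF⟩ | ⟨y, χ, rfl, a, hF⟩ |
    ⟨y, χ, rfl, hF⟩ | ⟨r, args, rfl, hF⟩ | ⟨r, args, rfl, hT⟩
  · exact h
  · exact fun hi => hF ((eval_conj I l ν).2 (List.forall_mem_of_forall_get_ne i hi hT))
  · exact fun hψν => hF ((eval_disj I l ν).2 ⟨ψ, hψ, hψν⟩)
  · intro ha
    refine hF ((eval_all I y ψ ν₀).2 fun a' => ?_)
    rcases eq_or_ne a' a with rfl | hne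
    exacts [ha, hT a' hne]
  · exact fun ha => hF ((eval_ex I y ψ ν₀).2 ⟨a, ha⟩)
  · intro h
    obtain ⟨χ, hχ, hχt⟩ := (eval_disj I l ν).1 h
    exact hF χ hχ hχt
  · exact fun h => hF ((eval_conj I l ν).1 h χ hχ)
  · exact fun h => hF ((eval_all I y χ ν).1 h a)
  · intro h
    obtain ⟨a, ha⟩ := (eval_ex I y χ ν).1 h
    exact hF a ha
  · exact fun h => hF ((eval_atom I r args ν).1 h)
  · exact fun h => (eval_natom I r args ν).1 h hT

theorem step_ofModel_Tp {r : Rel} {t : Fin (ar r) → D} (h : (step (ofModel I)).Tp r t) :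
    I r t := by
  rcases h with h | ⟨args, ν, rfl, h | h⟩
  · exact h
  · exact (eval_atom I r args ν).1 h
  · exact not_not.1 fun hn => h ((eval_natom I r args ν).2 hn)

theorem step_ofModel_Fp {r : Rel} {t : Fin (ar r) → D} (h : (step (ofModel I)).Fp r t) :
    ¬ I r t := by
  rcases h with h | ⟨args, ν, rfl, h | h⟩
  · exact h
  · exact fun hn => h ((eval_atom I r args ν).2 hn)
  · exact (eval_natom I r args ν).1 h

theorem stepFrom_ofModel {InstRel : Rel → Prop} {IA : (r : Rel) → (Fin (ar r) → D) → Prop}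
    {φ : Formula D Rel ar} (hI : expansionOf InstRel IA I) (hφ : ∀ ν, eval I φ ν) :
    stepFrom InstRel IA φ (ofModel I) = ofModel I := by
  have hTf : (stepFrom InstRel IA φ (ofModel I)).Tf = eval I := by
    funext ψ ν
    refine propext ⟨?_, fun h => Or.inl (Or.inl h)⟩
    rintro (h | rfl)
    exacts [step_ofModel_Tf I h, hφ ν]
  have hFf : (stepFrom InstRel IA φ (ofModel I)).Ff = fun ψ ν => ¬ eval I ψ ν := by
    funext ψ ν
    exact propext ⟨step_ofModel_Ff I, Or.inl⟩
  have hTp : (stepFrom InstRel IA φ (ofModel I)).Tp = I := by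
    funext r t
    refine propext ⟨?_, fun h => Or.inl (Or.inl h)⟩
    rintro (h | ⟨hr, ht⟩)
    exacts [step_ofModel_Tp I h, (hI r hr t).2 ht]
  have hFp : (stepFrom InstRel IA φ (ofModel I)).Fp = fun r t => ¬ I r t := by
    funext r t
    refine propext ⟨?_, fun h => Or.inl (Or.inl h)⟩
    rintro (h | ⟨hr, ht⟩)
    exacts [step_ofModel_Fp I h, fun hn => ht ((hI r hr t).1 hn)]
  exact Bnds.ext hTf hFf hTp hFp

end Bnds

end Model

theorem bounds_sound_general (InstRel : Rel → Prop)
    (IA : (r : Rel) → (Fin (ar r) → D) → Prop)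
    (φ : Formula D Rel ar)
    (L : Bnds D Rel ar)
    (hleast : ∀ B : Bnds D Rel ar, stepFrom InstRel IA φ B = B → leBnds L B) :
    ∀ (ψ : Formula D Rel ar) (ν : ℕ → D),
      (L.Tf ψ ν → ∀ I : (r : Rel) → (Fin (ar r) → D) → Prop,
        expansionOf InstRel IA I → (∀ ν' : ℕ → D, eval I φ ν') → eval I ψ ν) ∧
      (L.Ff ψ ν → ∀ I : (r : Rel) → (Fin (ar r) → D) → Prop,
        expansionOf InstRel IA I → (∀ ν' : ℕ → D, eval I φ ν') → ¬ eval I ψ ν) := by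
  intro ψ ν
  have hL I (hI : expansionOf InstRel IA I) (hφ : ∀ ν', eval I φ ν') :=
    hleast _ (Bnds.stepFrom_ofModel I hI hφ)
  exact ⟨fun hT I hI hφ => (hL I hI hφ).1 ψ ν hT, fun hF I hI hφ => (hL I hI hφ).2.1 ψ ν hF⟩

/-- soundness of bound propagation.  Let `L` be the least fixed
point of the propagation rules started from the instance bounds and the root
bound `T_φ`, where the NNF sentence `φ` is assumed `𝒜`-satisfiable.  Then for
every subformula `ψ` and assignment (tuple) `ν`: if `ν ∈ T_ψ` then `ψ` is true
under `ν` in every expansion of `𝒜` satisfying `φ`, and if `ν ∈ F_ψ` then `ψ`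
is false under `ν` in every such expansion. -/
theorem bounds_sound (InstRel : Rel → Prop)
    (IA : (r : Rel) → (Fin (ar r) → D) → Prop)
    (φ : Formula D Rel ar)
    (hsat : ∃ I : (r : Rel) → (Fin (ar r) → D) → Prop,
      expansionOf InstRel IA I ∧ ∀ ν : ℕ → D, eval I φ ν)
    (L : Bnds D Rel ar)
    (hfix : stepFrom InstRel IA φ L = L)
    (hleast : ∀ B : Bnds D Rel ar, stepFrom InstRel IA φ B = B → leBnds L B) :
    ∀ (ψ : Formula D Rel ar) (ν : ℕ → D),
      (L.Tf ψ ν → ∀ I : (r : Rel) → (Fin (ar r) → D) → Prop,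
        expansionOf InstRel IA I → (∀ ν' : ℕ → D, eval I φ ν') → eval I ψ ν) ∧
      (L.Ff ψ ν → ∀ I : (r : Rel) → (Fin (ar r) → D) → Prop,
        expansionOf InstRel IA I → (∀ ν' : ℕ → D, eval I φ ν') → ¬ eval I ψ ν) :=
  bounds_sound_general InstRel IA φ L hleast
end
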